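/- arXiv:2010.13893 — 7 statements merged into one kernel-verified Lean document; each statement's English description precedes it below -/
import Mathlib

section
/- Let f : E → ℝ be convex and attain its minimum value f* at a point x* ∈ E. Fix an integer p ≥ 1 and constants L > 0, R > 0. Let (x_k)_{k≥0} be a sequence in E such that, for every k, there exists a p-th order surrogate g_k of f at x_k with error constant L, and x_{k+1} is a global minimizer of g_k over E. Assume that every x ∈ E with f(x) ≤ f(x_0) satisfies ‖x − x*‖ ≤ R. Then for every k ≥ 1: f(x_k) − f* ≤ L·R^{p+1} / ( p! · (1 + k/(p+1))^p ). -/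
/-!
Taylor's theorem turns the surrogate conditions into the upper model
`f y + L ‖y - xₖ‖^(p+1) / (p+1)!` of `f`, which `xₖ₊₁` beats at every `y`. Testing it at
`y = (1 - α) xₖ + α x*` and using convexity together with `‖xₖ - x*‖ ≤ R` (the iterates stay in the
initial level set) gives `δₖ₊₁ ≤ (1 - α) δₖ + α^(p+1) M` for all `α ∈ [0, 1]`, where
`δₖ = f xₖ - f x*` and `M = L R^(p+1) / (p+1)!`. Choosing `α = 1` for `k = 0` and
`α = (p+1)/(k+p+2)` afterwards, Bernoulli's inequality propagates `δₖ ≤ M (p+1)^(p+1) / (k+p+1)^p`.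
-/

open scoped RealInnerProductSpace BigOperators

variable {E : Type*} [NormedAddCommGroup E] [InnerProductSpace ℝ E] [FiniteDimensional ℝ E]

/-- `ψ : E → ℝ` is `p` times continuously differentiable and its `p`-th Fréchet
derivative is `L`-Lipschitz. -/
def HasLipschitzDerivOfOrder (p : ℕ) (L : ℝ) (ψ : E → ℝ) : Prop :=
  ContDiff ℝ p ψ ∧
    ∀ x y : E, ‖iteratedFDeriv ℝ p ψ x - iteratedFDeriv ℝ p ψ y‖ ≤ L * ‖x - y‖

/-- `g` is a `p`-th order surrogate of `f` at `x` with error constant `L`: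
(i) `g ≥ f`; (ii) the error `h := g - f` has `L`-Lipschitz `p`-th derivative;
(iii) `h(x) = 0` and `Dⁱh(x) = 0` for `i = 1, …, p`. -/
def IsSurrogate (p : ℕ) (L : ℝ) (f g : E → ℝ) (x : E) : Prop :=
  (∀ y : E, f y ≤ g y) ∧
  HasLipschitzDerivOfOrder p L (fun y => g y - f y) ∧
  g x - f x = 0 ∧
  ∀ i : ℕ, 1 ≤ i → i ≤ p → iteratedFDeriv ℝ i (fun y => g y - f y) x = 0

open scoped Nat

theorem sub_mul_add_one_pow_le_pow_succ {a : ℝ} (ha : 0 < a) (p : ℕ) :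
    (a - p) * (a + 1) ^ p ≤ a ^ (p + 1) := by
  have hbern := one_add_mul_sub_le_pow (a := a / (a + 1))
    (by rw [le_div_iff₀ (by positivity)]; linarith) p
  rw [div_pow, le_div_iff₀ (by positivity)] at hbern
  calc (a - p) * (a + 1) ^ p ≤ a * (1 + p * (a / (a + 1) - 1)) * (a + 1) ^ p := by
        gcongr
        rw [div_sub_one (by positivity), mul_div_assoc', one_add_div (by positivity),
          mul_div_assoc', le_div_iff₀ (by positivity)]
        nlinarith
    _ ≤ a * a ^ p := by rw [mul_assoc]; gcongr
    _ = a ^ (p + 1) := by ring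

theorem one_sub_mul_div_pow_add_pow_le {a M : ℝ} (ha : 0 < a) (hM : 0 ≤ M) (p : ℕ) :
    (1 - (p + 1) / (a + 1)) * (M * (p + 1) ^ (p + 1) / a ^ p) + ((p + 1) / (a + 1)) ^ (p + 1) * M
      ≤ M * (p + 1) ^ (p + 1) / (a + 1) ^ p := by
  have hgap : M * (p + 1) ^ (p + 1) / (a + 1) ^ p
      - ((1 - (p + 1) / (a + 1)) * (M * (p + 1) ^ (p + 1) / a ^ p)
        + ((p + 1) / (a + 1)) ^ (p + 1) * M)
      = M * (p + 1) ^ (p + 1) * (a ^ (p + 1) - (a - p) * (a + 1) ^ p)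
          / ((a + 1) ^ (p + 1) * a ^ p) := by
    rw [div_pow]
    field_simp
    ring
  have hbern : 0 ≤ a ^ (p + 1) - (a - p) * (a + 1) ^ p :=
    sub_nonneg.2 (sub_mul_add_one_pow_le_pow_succ ha p)
  have : 0 ≤ M * (p + 1) ^ (p + 1) * (a ^ (p + 1) - (a - p) * (a + 1) ^ p)
      / ((a + 1) ^ (p + 1) * a ^ p) := by positivity
  linarith

theorem le_div_pow_of_forall_le_one_sub_mul_add_pow {δ : ℕ → ℝ} {M : ℝ} (hM : 0 ≤ M) {p : ℕ}
    (hrec : ∀ k α, 0 ≤ α → α ≤ 1 → δ (k + 1) ≤ (1 - α) * δ k + α ^ (p + 1) * M) :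
    ∀ k, 1 ≤ k → δ k ≤ M * (p + 1) ^ (p + 1) / (k + p + 1) ^ p := by
  intro k hk
  induction k, hk using Nat.le_induction with
  | base =>
    have h1 : δ 1 ≤ M := by simpa using hrec 0 1 zero_le_one le_rfl
    have h2 : ((1 : ℕ) + p + 1 : ℝ) ^ p ≤ (p + 1) ^ (p + 1) := by
      have := sub_mul_add_one_pow_le_pow_succ (a := p + 1) (by positivity) p
      rw [add_sub_cancel_left, one_mul] at this
      rwa [Nat.cast_one, add_comm (1 : ℝ) p]
    calc δ 1 ≤ M := h1
      _ ≤ M * (p + 1) ^ (p + 1) / ((1 : ℕ) + p + 1) ^ p := by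
        rw [le_div_iff₀ (by positivity)]
        exact mul_le_mul_of_nonneg_left h2 hM
  | succ k hk ih =>
    have hα : (p + 1 : ℝ) / (k + p + 1 + 1) ≤ 1 := by
      rw [div_le_one (by positivity)]; linarith [(k.cast_nonneg : (0 : ℝ) ≤ k)]
    calc δ (k + 1)
        ≤ (1 - (p + 1) / (k + p + 1 + 1)) * δ k + ((p + 1) / (k + p + 1 + 1)) ^ (p + 1) * M :=
          hrec k _ (by positivity) hα
      _ ≤ (1 - (p + 1) / (k + p + 1 + 1)) * (M * (p + 1) ^ (p + 1) / (k + p + 1) ^ p)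
            + ((p + 1) / (k + p + 1 + 1)) ^ (p + 1) * M := by gcongr
      _ ≤ M * (p + 1) ^ (p + 1) / (k + p + 1 + 1) ^ p :=
          one_sub_mul_div_pow_add_pow_le (by positivity) hM p
      _ = M * (p + 1) ^ (p + 1) / ((k + 1 : ℕ) + p + 1) ^ p := by push_cast; ring

theorem norm_le_of_norm_fderiv_le_pow {V F : Type*} [NormedAddCommGroup V] [NormedSpace ℝ V]
    [NormedAddCommGroup F] [NormedSpace ℝ F] {ψ : V → F} (hψ : Differentiable ℝ ψ) {x : V}
    (hx : ψ x = 0) {C : ℝ} {n : ℕ} (hbound : ∀ z, ‖fderiv ℝ ψ z‖ ≤ C * ‖z - x‖ ^ n / n !)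
    (y : V) : ‖ψ y‖ ≤ C * ‖y - x‖ ^ (n + 1) / (n + 1)! := by
  set v := y - x
  have hsegment : ∀ t : ℝ,
      HasDerivAt (fun s : ℝ => ψ (x + s • v)) (fderiv ℝ ψ (x + t • v) v) t :=
    fun t => (hψ _).hasFDerivAt.comp_hasDerivAt t
      (((hasDerivAt_id t).smul_const v).const_add x |>.congr_deriv (one_smul ℝ v))
  have hboundary : ∀ t : ℝ, HasDerivAt (fun s : ℝ => C * ‖v‖ ^ (n + 1) * s ^ (n + 1) / (n + 1)!)
      (C * ‖v‖ ^ (n + 1) * t ^ n / n !) t := by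
    intro t
    refine (((hasDerivAt_pow (n + 1) t).const_mul _).div_const _).congr_deriv ?_
    rw [Nat.factorial_succ]
    push_cast
    field_simp
  have hderiv_le : ∀ t ∈ Set.Ico (0 : ℝ) 1,
      ‖fderiv ℝ ψ (x + t • v) v‖ ≤ C * ‖v‖ ^ (n + 1) * t ^ n / n ! := by
    rintro t ⟨ht, -⟩
    calc ‖fderiv ℝ ψ (x + t • v) v‖ ≤ ‖fderiv ℝ ψ (x + t • v)‖ * ‖v‖ :=
          (fderiv ℝ ψ _).le_opNorm v
      _ ≤ C * ‖t • v‖ ^ n / n ! * ‖v‖ := by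
        gcongr
        simpa using hbound (x + t • v)
      _ = C * ‖v‖ ^ (n + 1) * t ^ n / n ! := by
        rw [norm_smul, Real.norm_of_nonneg ht]
        ring
  have := image_norm_le_of_norm_deriv_right_le_deriv_boundary
    (hψ.continuous.comp (by fun_prop)).continuousOn (fun t _ => (hsegment t).hasDerivWithinAt)
    (by simp [hx]) hboundary hderiv_le (Set.right_mem_Icc.2 zero_le_one)
  simpa [v] using this

theorem norm_iteratedFDeriv_le_of_iteratedFDeriv_eq_zero {V F : Type*} [NormedAddCommGroup V]
    [NormedSpace ℝ V] [NormedAddCommGroup F] [NormedSpace ℝ F] {h : V → F} {p : ℕ} {L : ℝ}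
    (hh : ContDiff ℝ p h)
    (hlip : ∀ a b, ‖iteratedFDeriv ℝ p h a - iteratedFDeriv ℝ p h b‖ ≤ L * ‖a - b‖)
    {x : V} (hx : ∀ i ≤ p, iteratedFDeriv ℝ i h x = 0) {j : ℕ} (hj : j ≤ p) (y : V) :
    ‖iteratedFDeriv ℝ (p - j) h y‖ ≤ L * ‖y - x‖ ^ (j + 1) / (j + 1)! := by
  induction j generalizing y with
  | zero => simpa [hx p le_rfl] using hlip y x
  | succ j ih =>
    have hsucc : p - (j + 1) + 1 = p - j := by omega
    refine norm_le_of_norm_fderiv_le_pow (hh.differentiable_iteratedFDeriv (by norm_cast; omega))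
      (hx _ (Nat.sub_le _ _)) (fun z => ?_) y
    rw [norm_fderiv_iteratedFDeriv, hsucc]
    exact ih (by omega) z

theorem norm_le_of_iteratedFDeriv_eq_zero {V F : Type*} [NormedAddCommGroup V]
    [NormedSpace ℝ V] [NormedAddCommGroup F] [NormedSpace ℝ F] {h : V → F} {p : ℕ} {L : ℝ}
    (hh : ContDiff ℝ p h)
    (hlip : ∀ a b, ‖iteratedFDeriv ℝ p h a - iteratedFDeriv ℝ p h b‖ ≤ L * ‖a - b‖)
    {x : V} (hx : ∀ i ≤ p, iteratedFDeriv ℝ i h x = 0) (y : V) :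
    ‖h y‖ ≤ L * ‖y - x‖ ^ (p + 1) / (p + 1)! := by
  have := norm_iteratedFDeriv_le_of_iteratedFDeriv_eq_zero hh hlip hx le_rfl y
  rwa [Nat.sub_self, norm_iteratedFDeriv_zero] at this

theorem IsSurrogate.le_add_norm_pow {V : Type*} [NormedAddCommGroup V] [InnerProductSpace ℝ V]
    {p : ℕ} {L : ℝ} {f g : V → ℝ} {x : V} (hg : IsSurrogate p L f g x) (y : V) :
    g y ≤ f y + L * ‖y - x‖ ^ (p + 1) / (p + 1)! := by
  obtain ⟨-, ⟨hcont, hlip⟩, hx, hvanish⟩ := hg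
  have hflat : ∀ i ≤ p, iteratedFDeriv ℝ i (fun y => g y - f y) x = 0 := by
    rintro (_ | i) hi
    · ext m
      simp [hx]
    · exact hvanish _ i.succ_pos hi
  have := norm_le_of_iteratedFDeriv_eq_zero hcont hlip hflat y
  rw [Real.norm_eq_abs] at this
  linarith [le_abs_self (g y - f y)]

theorem ConvexOn.sub_le_of_forall_le_add_norm_pow {V : Type*} [NormedAddCommGroup V]
    [NormedSpace ℝ V] {f : V → ℝ} (hf : ConvexOn ℝ Set.univ f) {x x' xstar : V} {C R : ℝ}
    {q : ℕ} (hC : 0 ≤ C) (hR : ‖x - xstar‖ ≤ R) (hx' : ∀ y, f x' ≤ f y + C * ‖y - x‖ ^ q)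
    {α : ℝ} (hα₀ : 0 ≤ α) (hα₁ : α ≤ 1) :
    f x' - f xstar ≤ (1 - α) * (f x - f xstar) + α ^ q * (C * R ^ q) := by
  set y := (1 - α) • x + α • xstar
  have hconv : f y ≤ (1 - α) * f x + α * f xstar :=
    hf.2 trivial trivial (by linarith) hα₀ (by ring)
  have hdist : ‖y - x‖ ≤ α * R := by
    have : y - x = α • (xstar - x) := by module
    rw [this, norm_smul, Real.norm_of_nonneg hα₀, norm_sub_rev]
    exact mul_le_mul_of_nonneg_left hR hα₀
  have hmodel : C * ‖y - x‖ ^ q ≤ α ^ q * (C * R ^ q) :=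
    calc C * ‖y - x‖ ^ q ≤ C * (α * R) ^ q := by gcongr
      _ = α ^ q * (C * R ^ q) := by ring
  linarith [hx' y]

theorem ghom_convex_sublinear_rate_general
    (f : E → ℝ) (hf : ConvexOn ℝ Set.univ f)
    (xstar : E)
    (p : ℕ) (L R : ℝ) (hL : 0 < L)
    (x : ℕ → E)
    (hstep : ∀ k : ℕ, ∃ g : E → ℝ, IsSurrogate p L f g (x k) ∧
      ∀ y : E, g (x (k + 1)) ≤ g y)
    (hlevel : ∀ z : E, f z ≤ f (x 0) → ‖z - xstar‖ ≤ R) :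
    ∀ k : ℕ, 1 ≤ k →
      f (x k) - f xstar ≤
        L * R ^ (p + 1) /
          ((Nat.factorial p : ℝ) * (1 + (k : ℝ) / ((p : ℝ) + 1)) ^ p) := by
  have hR : 0 ≤ R := (norm_nonneg _).trans (hlevel _ le_rfl)
  have hmodel : ∀ k y, f (x (k + 1)) ≤ f y + L / (p + 1)! * ‖y - x k‖ ^ (p + 1) := by
    intro k y
    obtain ⟨g, hg, hargmin⟩ := hstep k
    calc f (x (k + 1)) ≤ g (x (k + 1)) := hg.1 _
      _ ≤ g y := hargmin y
      _ ≤ f y + L * ‖y - x k‖ ^ (p + 1) / (p + 1)! := hg.le_add_norm_pow y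
      _ = f y + L / (p + 1)! * ‖y - x k‖ ^ (p + 1) := by ring
  have hanti : Antitone (f ∘ x) :=
    antitone_nat_of_succ_le fun k => by simpa using hmodel k (x k)
  have hrec : ∀ k α, 0 ≤ α → α ≤ 1 → f (x (k + 1)) - f xstar ≤
      (1 - α) * (f (x k) - f xstar) + α ^ (p + 1) * (L / (p + 1)! * R ^ (p + 1)) :=
    fun k α hα₀ hα₁ => hf.sub_le_of_forall_le_add_norm_pow (by positivity)
      (hlevel _ (hanti (Nat.zero_le k))) (hmodel k) hα₀ hα₁
  intro k hk
  calc f (x k) - f xstar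
      ≤ L / (p + 1)! * R ^ (p + 1) * (p + 1) ^ (p + 1) / (k + p + 1) ^ p :=
        le_div_pow_of_forall_le_one_sub_mul_add_pow (δ := fun k => f (x k) - f xstar)
          (by positivity) hrec k hk
    _ = L * R ^ (p + 1) / ((Nat.factorial p : ℝ) * (1 + (k : ℝ) / ((p : ℝ) + 1)) ^ p) := by
        rw [one_add_div (by positivity), div_pow, Nat.factorial_succ]
        push_cast
        field_simp
        ring

/-- Global sublinear convergence of the general higher-order
majorization-minimization method for convex objectives. -/
theorem ghom_convex_sublinear_rate
    (f : E → ℝ) (hf : ConvexOn ℝ Set.univ f)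
    (xstar : E) (hmin : ∀ y : E, f xstar ≤ f y)
    (p : ℕ) (hp : 1 ≤ p) (L R : ℝ) (hL : 0 < L) (hR : 0 < R)
    (x : ℕ → E)
    (hstep : ∀ k : ℕ, ∃ g : E → ℝ, IsSurrogate p L f g (x k) ∧
      ∀ y : E, g (x (k + 1)) ≤ g y)
    (hlevel : ∀ z : E, f z ≤ f (x 0) → ‖z - xstar‖ ≤ R) :
    ∀ k : ℕ, 1 ≤ k →
      f (x k) - f xstar ≤
        L * R ^ (p + 1) /
          ((Nat.factorial p : ℝ) * (1 + (k : ℝ) / ((p : ℝ) + 1)) ^ p) :=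
  ghom_convex_sublinear_rate_general f hf xstar p L R hL x hstep hlevel
end

section
/- Let f : E → ℝ be convex, let p ≥ 1 be an integer, L > 0, and x̄ ∈ E. Let h : E → ℝ have L-Lipschitz p-th derivative and satisfy h(x̄) = 0 and D^i h(x̄) = 0 for i = 1, …, p. If x⁺ is a global minimizer over E of f + h, then −∇h(x⁺) is a subgradient of f at x⁺ and ‖∇h(x⁺)‖ ≤ (L/p!)·‖x⁺ − x̄‖^p. -/
open scoped RealInnerProductSpace BigOperators

variable {E : Type*} [NormedAddCommGroup E] [InnerProductSpace ℝ E] [FiniteDimensional ℝ E]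

/-!
Convexity of `f` bounds `f` on the segment from `x⁺` to `y` by its chord, so
`t ↦ h (x⁺ + t (y - x⁺)) + t (f y - f x⁺)` is minimal on `[0, 1]` at `t = 0`; its right
derivative there, `Dh(x⁺)(y - x⁺) + f y - f x⁺`, is therefore nonnegative.
For the bound, integrate downwards from the Lipschitz condition on `D^p h`: since `D^j h`
vanishes at `x̄` for `1 ≤ j ≤ p`, the mean value inequality turns
`‖D^(j+1) h z‖ ≤ C ‖z - x̄‖^m` into `‖D^j h z‖ ≤ C/(m+1) ‖z - x̄‖^(m+1)`.
-/

section

variable {V F : Type*} [NormedAddCommGroup V] [NormedSpace ℝ V]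
  [NormedAddCommGroup F] [NormedSpace ℝ F]

theorem ConvexOn.sub_fderiv_le_of_forall_add_le {f g : V → ℝ} {x : V}
    (hf : ConvexOn ℝ Set.univ f) (hg : DifferentiableAt ℝ g x)
    (hmin : ∀ y, f x + g x ≤ f y + g y) (y : V) :
    f x - fderiv ℝ g x (y - x) ≤ f y := by
  set v := y - x
  let φ : ℝ → ℝ := fun t => g (x + t • v) + t * (f y - f x)
  have hφ : HasDerivAt φ (fderiv ℝ g x v + (f y - f x)) 0 := by
    have hline : HasDerivAt (fun t : ℝ => x + t • v) v 0 := by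
      simpa using ((hasDerivAt_id (0 : ℝ)).smul_const v).const_add x
    have hgx : HasFDerivAt g (fderiv ℝ g x) (x + (0 : ℝ) • v) := by
      simpa using hg.hasFDerivAt
    exact (hgx.comp_hasDerivAt 0 hline).add (hasDerivAt_mul_const _)
  have hφmin : IsLocalMinOn φ (Set.Icc 0 1) 0 := by
    refine IsMinOn.localize fun t ⟨ht0, ht1⟩ => ?_
    have hchord : f (x + t • v) ≤ (1 - t) * f x + t * f y := by
      have := hf.2 (Set.mem_univ x) (Set.mem_univ y) (sub_nonneg.2 ht1) ht0 (by ring)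
      rwa [show (1 - t) • x + t • y = x + t • v by simp only [v]; module] at this
    have := hmin (x + t • v)
    simp only [φ, zero_smul, add_zero, zero_mul, Set.mem_ofPred_eq]
    linarith
  have h1 : (1 : ℝ) ∈ posTangentConeAt (Set.Icc 0 1) 0 :=
    mem_posTangentConeAt_of_segment_subset (by simp [segment_eq_Icc])
  have hslope := hφmin.hasFDerivWithinAt_nonneg hφ.hasFDerivAt.hasFDerivWithinAt h1
  simp only [ContinuousLinearMap.toSpanSingleton_apply, one_smul] at hslope
  linarith

theorem norm_sub_le_of_norm_fderiv_le_mul_pow {g : V → F} (hg : Differentiable ℝ g)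
    {a : V} {C : ℝ} {m : ℕ} (hbound : ∀ z, ‖fderiv ℝ g z‖ ≤ C * ‖z - a‖ ^ m) (x : V) :
    ‖g x - g a‖ ≤ C / (m + 1) * ‖x - a‖ ^ (m + 1) := by
  set v := x - a
  have hline : ∀ t : ℝ, HasDerivAt (fun s : ℝ => a + s • v) v t := fun t => by
    simpa using ((hasDerivAt_id t).smul_const v).const_add a
  have hB : ∀ t : ℝ, HasDerivAt (fun s : ℝ => C * ‖v‖ ^ (m + 1) * (s ^ (m + 1) / (m + 1)))
      (C * ‖v‖ ^ (m + 1) * t ^ m) t := fun t => by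
    refine (((hasDerivAt_pow (m + 1) t).div_const ((m : ℝ) + 1)).const_mul
      (C * ‖v‖ ^ (m + 1))).congr_deriv ?_
    rw [Nat.add_sub_cancel]
    push_cast
    field_simp
  have key := image_norm_le_of_norm_deriv_right_le_deriv_boundary
    (f := fun t : ℝ => g (a + t • v) - g a) (f' := fun t => fderiv ℝ g (a + t • v) v)
    (by have := hg.continuous; fun_prop)
    (fun t _ => (((hg _).hasFDerivAt.comp_hasDerivAt t (hline t)).sub_const _).hasDerivWithinAt)
    (by simp) hB
    (fun t ht => calc
      ‖fderiv ℝ g (a + t • v) v‖ ≤ C * ‖a + t • v - a‖ ^ m * ‖v‖ :=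
        ((fderiv ℝ g _).le_opNorm v).trans (mul_le_mul_of_nonneg_right (hbound _) (norm_nonneg v))
      _ = C * ‖v‖ ^ (m + 1) * t ^ m := by
        rw [add_sub_cancel_left, norm_smul, Real.norm_of_nonneg ht.1]; ring)
    (Set.right_mem_Icc.2 zero_le_one)
  rw [one_smul, one_pow, add_sub_cancel] at key
  exact key.trans_eq (by ring)

theorem norm_iteratedFDeriv_le_of_lipschitz_of_vanishing {g : V → F} {a : V} {L : ℝ} (j k : ℕ)
    (hg : ContDiff ℝ (j + k : ℕ) g)
    (hlip : ∀ x y, ‖iteratedFDeriv ℝ (j + k) g x - iteratedFDeriv ℝ (j + k) g y‖ ≤ L * ‖x - y‖)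
    (hvan : ∀ i, j ≤ i → i ≤ j + k → iteratedFDeriv ℝ i g a = 0) (x : V) :
    ‖iteratedFDeriv ℝ j g x‖ ≤ L / (k + 1).factorial * ‖x - a‖ ^ (k + 1) := by
  induction k generalizing j x with
  | zero =>
    simpa [hvan j le_rfl le_rfl] using hlip x a
  | succ k ih =>
    rw [show j + (k + 1) = j + 1 + k by omega] at hg hlip hvan
    have hderiv : ∀ z, ‖fderiv ℝ (iteratedFDeriv ℝ j g) z‖ ≤
        L / (k + 1).factorial * ‖z - a‖ ^ (k + 1) := fun z => by
      rw [norm_fderiv_iteratedFDeriv]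
      exact ih (j + 1) hg hlip (fun i hi hik => hvan i (by omega) hik) z
    have hdiff : Differentiable ℝ (iteratedFDeriv ℝ j g) :=
      hg.differentiable_iteratedFDeriv (by norm_cast; omega)
    have hmvt := norm_sub_le_of_norm_fderiv_le_mul_pow hdiff hderiv x
    rw [hvan j le_rfl (by omega), sub_zero] at hmvt
    refine hmvt.trans_eq ?_
    rw [Nat.factorial_succ (k + 1), div_div]
    push_cast
    ring

end

theorem subgradient_norm_bound_at_surrogate_minimizer_general
    (f : E → ℝ) (hf : ConvexOn ℝ Set.univ f)
    (p : ℕ) (hp : 1 ≤ p) (L : ℝ)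
    (xbar : E) (h : E → ℝ)
    (hh : HasLipschitzDerivOfOrder p L h)
    (hhi : ∀ i : ℕ, 1 ≤ i → i ≤ p → iteratedFDeriv ℝ i h xbar = 0)
    (xplus : E) (hmin : ∀ y : E, f xplus + h xplus ≤ f y + h y) :
    (∀ y : E, f xplus + ⟪-(gradient h xplus), y - xplus⟫ ≤ f y) ∧
    ‖gradient h xplus‖ ≤ L / (Nat.factorial p : ℝ) * ‖xplus - xbar‖ ^ p := by
  obtain ⟨hcd, hlip⟩ := hh
  obtain ⟨k, rfl⟩ := Nat.exists_eq_add_of_le hp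
  have hdiff : Differentiable ℝ h := hcd.differentiable (by norm_cast; omega)
  refine ⟨fun y => ?_, ?_⟩
  · rw [inner_neg_left, inner_gradient_left, ← sub_eq_add_neg]
    exact hf.sub_fderiv_le_of_forall_add_le (hdiff xplus) hmin y
  · rw [← LinearIsometryEquiv.norm_map (InnerProductSpace.toDual ℝ E), toDual_gradient,
      ← norm_iteratedFDeriv_one, add_comm 1 k]
    exact norm_iteratedFDeriv_le_of_lipschitz_of_vanishing 1 k hcd hlip hhi xplus

/-- If `x⁺` globally minimizes `f + h`, where `h` has `L`-Lipschitz `p`-th derivative and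
vanishes to order `p` at `x̄`, then `-∇h(x⁺)` is a subgradient of the convex `f` at `x⁺`
and `‖∇h(x⁺)‖ ≤ (L/p!)·‖x⁺ - x̄‖^p`. -/
theorem subgradient_norm_bound_at_surrogate_minimizer
    (f : E → ℝ) (hf : ConvexOn ℝ Set.univ f)
    (p : ℕ) (hp : 1 ≤ p) (L : ℝ) (hL : 0 < L)
    (xbar : E) (h : E → ℝ)
    (hh : HasLipschitzDerivOfOrder p L h)
    (hh0 : h xbar = 0)
    (hhi : ∀ i : ℕ, 1 ≤ i → i ≤ p → iteratedFDeriv ℝ i h xbar = 0)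
    (xplus : E) (hmin : ∀ y : E, f xplus + h xplus ≤ f y + h y) :
    (∀ y : E, f xplus + ⟪-(gradient h xplus), y - xplus⟫ ≤ f y) ∧
    ‖gradient h xplus‖ ≤ L / (Nat.factorial p : ℝ) * ‖xplus - xbar‖ ^ p :=
  subgradient_norm_bound_at_surrogate_minimizer_general f hf p hp L xbar h hh hhi xplus hmin
end

section
/- Let p ≥ 2 be an integer and let h : E → ℝ have L-Lipschitz p-th derivative. Let M ≥ L and x, y ∈ E. Define the quadratic form B(v) := D²h(x)[v, v] + Σ_{i=3}^{p} (1/(i−1)!) · D^i h(x)[(y−x)^{i−2}, v, v] + (M/p!)·‖y − x‖^{p−1}·‖v‖². Then for every v ∈ E: ∫₀¹ D²h(x + τ(y−x))[v, v] dτ ≤ B(v) ≤ ∫₀¹ D²h(x + τ(y−x))[v, v] dτ + ((M + L)/p!)·‖y − x‖^{p−1}·‖v‖². -/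
/-!
Along the segment put `g k τ = D^{k+2} h (x + τ (y - x))[(y - x)^k, v, v]`. Then `g k` has
derivative `g (k + 1)` for `k < p - 2`, and `g (p - 2)` is Lipschitz with constant
`L ‖y - x‖^{p-1} ‖v‖²`. The Taylor expansion of `g 0` of order `p - 2`, whose remainder is
controlled by that Lipschitz constant, integrates over `[0, 1]` to
`|∫₀¹ g 0 - Σ_{k ≤ p-2} g k 0 / (k + 1)!| ≤ L ‖y - x‖^{p-1} ‖v‖² / p!`.
Since `B(v)` is this sum plus `M ‖y - x‖^{p-1} ‖v‖² / p!` and `L ≤ M`, both bounds follow.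
-/

open scoped RealInnerProductSpace BigOperators

variable {E : Type*} [NormedAddCommGroup E] [InnerProductSpace ℝ E] [FiniteDimensional ℝ E]

/-- The quadratic form
`B(v) = D²h(x)[v,v] + Σ_{i=3}^p D^i h(x)[(y-x)^{i-2},v,v]/(i-1)! + (M/p!)‖y-x‖^{p-1}‖v‖²`. -/
noncomputable def ghomQuadForm (p : ℕ) (M : ℝ) (h : E → ℝ) (x y v : E) : ℝ :=
  iteratedFDeriv ℝ 2 h x ![v, v] +
    (∑ i ∈ Finset.Icc 3 p, (1 : ℝ) / (Nat.factorial (i - 1) : ℝ) *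
      iteratedFDeriv ℝ i h x (fun j : Fin i => if (j : ℕ) < i - 2 then y - x else v)) +
    M / (Nat.factorial p : ℝ) * ‖y - x‖ ^ (p - 1) * ‖v‖ ^ 2

open Finset
open scoped Nat

theorem prod_norm_ite_lt {F : Type*} [SeminormedAddCommGroup F] {n k : ℕ} (hk : k ≤ n) (u v : F) :
    ∏ j : Fin n, ‖if (j : ℕ) < k then u else v‖ = ‖u‖ ^ k * ‖v‖ ^ (n - k) := by
  rw [Fin.prod_univ_eq_prod_range (fun i => ‖if i < k then u else v‖), prod_apply_ite,
    prod_const, prod_const, range_eq_Ico, Ico_filter_lt]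
  simp only [not_lt]
  rw [Ico_filter_le]
  simp [hk]

theorem Fin.cons_ite_lt {α : Type*} {n k : ℕ} (u v : α) :
    (Fin.cons u (fun j : Fin n => if (j : ℕ) < k then u else v) : Fin (n + 1) → α) =
      fun j : Fin (n + 1) => if (j : ℕ) < k + 1 then u else v := by
  ext j
  refine Fin.cases ?_ (fun i => ?_) j <;> simp

theorem hasDerivAt_pow_succ_div_factorial (n : ℕ) (τ : ℝ) :
    HasDerivAt (fun t : ℝ => t ^ (n + 1) / (n + 1)!) (τ ^ n / n !) τ := by
  refine ((hasDerivAt_pow (n + 1) τ).div_const _).congr_deriv ?_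
  rw [Nat.factorial_succ, Nat.add_sub_cancel]
  push_cast
  field_simp

theorem hasDerivAt_sum_range_pow_div_factorial_mul (n : ℕ) (a : ℕ → ℝ) (τ : ℝ) :
    HasDerivAt (fun t : ℝ => ∑ k ∈ range (n + 1), t ^ k / k ! * a k)
      (∑ k ∈ range n, τ ^ k / k ! * a (k + 1)) τ := by
  induction n with
  | zero => simpa using hasDerivAt_const τ (a 0)
  | succ n ih =>
    rw [sum_range_succ]
    simp_rw [sum_range_succ _ (n + 1)]
    exact ih.fun_add ((hasDerivAt_pow_succ_div_factorial n τ).mul_const _)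

theorem abs_sub_taylor_le_of_lipschitz (m : ℕ) (g : ℕ → ℝ → ℝ) (C : ℝ)
    (hg : ∀ k < m, ∀ τ, HasDerivAt (g k) (g (k + 1) τ) τ)
    (hlip : ∀ τ, 0 ≤ τ → |g m τ - g m 0| ≤ C * τ) {τ : ℝ} (hτ : 0 ≤ τ) :
    |g 0 τ - ∑ k ∈ range (m + 1), τ ^ k / k ! * g k 0| ≤ C * τ ^ (m + 1) / (m + 1)! := by
  induction m generalizing g τ with
  | zero => simpa using hlip τ hτ
  | succ m ih =>
    have hR : ∀ t, HasDerivAt (fun s => g 0 s - ∑ k ∈ range (m + 2), s ^ k / k ! * g k 0)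
        (g 1 t - ∑ k ∈ range (m + 1), t ^ k / k ! * g (k + 1) 0) t := fun t =>
      (hg 0 m.succ_pos t).sub (hasDerivAt_sum_range_pow_div_factorial_mul (m + 1) _ t)
    have hB : ∀ t, HasDerivAt (fun s => C * (s ^ (m + 2) / (m + 2)!))
        (C * (t ^ (m + 1) / (m + 1)!)) t := fun t =>
      (hasDerivAt_pow_succ_div_factorial (m + 1) t).const_mul C
    have hfence := image_norm_le_of_norm_deriv_right_le_deriv_boundary (a := 0) (b := τ)
      (fun t _ => (hR t).continuousAt.continuousWithinAt) (fun t _ => (hR t).hasDerivWithinAt)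
      (by simp [sum_range_succ']) hB (fun t ht => ?_) (Set.right_mem_Icc.2 hτ)
    · simpa [mul_div_assoc] using hfence
    · simpa [mul_div_assoc] using
        ih (fun k => g (k + 1)) (fun k hk => hg (k + 1) (by omega)) hlip ht.1

theorem abs_integral_sub_taylor_le_of_lipschitz (m : ℕ) (g : ℕ → ℝ → ℝ) (C : ℝ)
    (hg₀ : Continuous (g 0)) (hg : ∀ k < m, ∀ τ, HasDerivAt (g k) (g (k + 1) τ) τ)
    (hlip : ∀ τ, 0 ≤ τ → |g m τ - g m 0| ≤ C * τ) :
    |(∫ τ in (0 : ℝ)..1, g 0 τ) - ∑ k ∈ range (m + 1), g k 0 / (k + 1)!| ≤ C / (m + 2)! := by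
  -- Prepending an antiderivative of `g 0` to the chain makes the integral the value at `τ = 1`.
  let G : ℕ → ℝ → ℝ
    | 0 => fun t => ∫ s in (0 : ℝ)..t, g 0 s
    | k + 1 => g k
  have hG : ∀ k < m + 1, ∀ τ, HasDerivAt (G k) (G (k + 1) τ) τ
    | 0, _, τ => (hg₀.integral_hasStrictDerivAt 0 τ).hasDerivAt
    | k + 1, hk, τ => hg k (by omega) τ
  simpa [G, sum_range_succ' _ (m + 1), div_eq_inv_mul] using
    abs_sub_taylor_le_of_lipschitz (m + 1) G C hG hlip zero_le_one

section LineDerivatives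

variable {F : Type*} [NormedAddCommGroup F] [NormedSpace ℝ F]

theorem hasDerivAt_iteratedFDeriv_comp_line {G : Type*} [NormedAddCommGroup G] [NormedSpace ℝ G]
    {N n : ℕ} {f : F → G} (hf : ContDiff ℝ N f) (hn : n < N) (x u : F) (w : Fin n → F) (τ : ℝ) :
    HasDerivAt (fun t : ℝ => iteratedFDeriv ℝ n f (x + t • u) w)
      (iteratedFDeriv ℝ (n + 1) f (x + τ • u) (Fin.cons u w)) τ := by
  have hline : HasDerivAt (fun t : ℝ => x + t • u) u τ := by
    simpa using ((hasDerivAt_id τ).smul_const u).const_add x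
  have hD := (hf.differentiable_iteratedFDeriv (mod_cast hn) _).hasFDerivAt.comp_hasDerivAt τ hline
  exact (ContinuousMultilinearMap.apply ℝ (fun _ : Fin n => F) G w).hasFDerivAt.comp_hasDerivAt τ hD

theorem abs_integral_iteratedFDeriv_two_sub_taylor_le {m : ℕ} {L : ℝ} {f : F → ℝ}
    (hf : ContDiff ℝ (m + 2 : ℕ) f)
    (hlip : ∀ x y, ‖iteratedFDeriv ℝ (m + 2) f x - iteratedFDeriv ℝ (m + 2) f y‖ ≤ L * ‖x - y‖)
    (x u v : F) :
    |(∫ τ in (0 : ℝ)..1, iteratedFDeriv ℝ 2 f (x + τ • u) ![v, v]) -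
        ∑ k ∈ range (m + 1),
          iteratedFDeriv ℝ (k + 2) f x (fun j => if (j : ℕ) < k then u else v) / (k + 1)!| ≤
      L * ‖u‖ ^ (m + 1) * ‖v‖ ^ 2 / (m + 2)! := by
  let g : ℕ → ℝ → ℝ := fun k τ =>
    iteratedFDeriv ℝ (k + 2) f (x + τ • u) (fun j => if (j : ℕ) < k then u else v)
  have hg₀ : Continuous (g 0) := by
    have := hf.continuous_iteratedFDeriv (m := 2) (by norm_cast; omega)
    fun_prop
  have hg : ∀ k < m, ∀ τ, HasDerivAt (g k) (g (k + 1) τ) τ := fun k hk τ => by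
    have hD := hasDerivAt_iteratedFDeriv_comp_line hf (by omega : k + 2 < m + 2) x u
      (fun j => if (j : ℕ) < k then u else v) τ
    rwa [Fin.cons_ite_lt] at hD
  have hgm : ∀ τ, 0 ≤ τ → |g m τ - g m 0| ≤ L * ‖u‖ ^ (m + 1) * ‖v‖ ^ 2 * τ := by
    intro τ hτ
    calc |g m τ - g m 0|
        = ‖(iteratedFDeriv ℝ (m + 2) f (x + τ • u) - iteratedFDeriv ℝ (m + 2) f x)
            (fun j => if (j : ℕ) < m then u else v)‖ := by simp [g, Real.norm_eq_abs]
      _ ≤ ‖iteratedFDeriv ℝ (m + 2) f (x + τ • u) - iteratedFDeriv ℝ (m + 2) f x‖ *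
            ∏ j : Fin (m + 2), ‖if (j : ℕ) < m then u else v‖ :=
          ContinuousMultilinearMap.le_opNorm _ _
      _ ≤ L * (τ * ‖u‖) * (‖u‖ ^ m * ‖v‖ ^ 2) := by
          rw [prod_norm_ite_lt (by omega), Nat.add_sub_cancel_left]
          gcongr
          simpa [norm_smul, abs_of_nonneg hτ] using hlip (x + τ • u) x
      _ = L * ‖u‖ ^ (m + 1) * ‖v‖ ^ 2 * τ := by ring
  simpa [g, mul_div_assoc, Matrix.vecCons_const, Matrix.vec_single_eq_const] using
    abs_integral_sub_taylor_le_of_lipschitz m g _ hg₀ hg hgm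

end LineDerivatives

omit [FiniteDimensional ℝ E] in
theorem ghomQuadForm_add_two (m : ℕ) (M : ℝ) (h : E → ℝ) (x y v : E) :
    ghomQuadForm (m + 2) M h x y v =
      ∑ k ∈ range (m + 1),
          iteratedFDeriv ℝ (k + 2) h x (fun j => if (j : ℕ) < k then y - x else v) / (k + 1)! +
        M / (m + 2)! * ‖y - x‖ ^ (m + 1) * ‖v‖ ^ 2 := by
  rw [ghomQuadForm, sum_range_succ', ← Ico_add_one_right_eq_Icc, sum_Ico_eq_sum_range,
    show m + 2 + 1 - 3 = m by omega, show m + 2 - 1 = m + 1 by omega, add_comm (∑ k ∈ range m, _)]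
  congr 2
  · simp [Matrix.vecCons_const, Matrix.vec_single_eq_const]
  · refine sum_congr rfl fun k _ => ?_
    rw [show 3 + k = k + 1 + 2 by omega]
    simp [div_eq_inv_mul]

theorem ghom_quadform_bounds_general
    (p : ℕ) (hp : 2 ≤ p) (L : ℝ)
    (h : E → ℝ) (hh : HasLipschitzDerivOfOrder p L h)
    (M : ℝ) (hM : L ≤ M) (x y : E) :
    ∀ v : E,
      (∫ τ in (0:ℝ)..1, iteratedFDeriv ℝ 2 h (x + τ • (y - x)) ![v, v]) ≤
        ghomQuadForm p M h x y v ∧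
      ghomQuadForm p M h x y v ≤
        (∫ τ in (0:ℝ)..1, iteratedFDeriv ℝ 2 h (x + τ • (y - x)) ![v, v]) +
          (M + L) / (Nat.factorial p : ℝ) * ‖y - x‖ ^ (p - 1) * ‖v‖ ^ 2 := by
  intro v
  obtain ⟨m, rfl⟩ : ∃ m, p = m + 2 := ⟨p - 2, by omega⟩
  obtain ⟨hlower, hupper⟩ :=
    abs_le.1 (abs_integral_iteratedFDeriv_two_sub_taylor_le hh.1 hh.2 x (y - x) v)
  have hLM : L * (‖y - x‖ ^ (m + 1) * ‖v‖ ^ 2 / (m + 2)!) ≤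
      M * (‖y - x‖ ^ (m + 1) * ‖v‖ ^ 2 / (m + 2)!) := by gcongr
  rw [ghomQuadForm_add_two, show m + 2 - 1 = m + 1 by omega]
  exact ⟨by linear_combination hupper + hLM, by linear_combination hlower⟩

/-- Two-sided bounds on the quadratic form `B` in terms of the averaged Hessian
of `h` along the segment from `x` to `y`. -/
theorem ghom_quadform_bounds
    (p : ℕ) (hp : 2 ≤ p) (L : ℝ) (hL : 0 < L)
    (h : E → ℝ) (hh : HasLipschitzDerivOfOrder p L h)
    (M : ℝ) (hM : L ≤ M) (x y : E) :
    ∀ v : E,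
      (∫ τ in (0:ℝ)..1, iteratedFDeriv ℝ 2 h (x + τ • (y - x)) ![v, v]) ≤
        ghomQuadForm p M h x y v ∧
      ghomQuadForm p M h x y v ≤
        (∫ τ in (0:ℝ)..1, iteratedFDeriv ℝ 2 h (x + τ • (y - x)) ![v, v]) +
          (M + L) / (Nat.factorial p : ℝ) * ‖y - x‖ ^ (p - 1) * ‖v‖ ^ 2 :=
  ghom_quadform_bounds_general p hp L h hh M hM x y
end

section
/- Let f : E → ℝ be differentiable with f(x) ≥ f* for all x ∈ E. Fix an integer p ≥ 1 and constants L > 0, Δ > 0. Let (x_k)_{k≥0} be a sequence in E such that for every k there exists h_k : E → ℝ with: h_k has L-Lipschitz p-th derivative; h_k(x_k) = 0 and D^i h_k(x_k) = 0 for i = 1, …, p; h_k(y) ≥ Δ·‖y − x_k‖^{p+1} for all y ∈ E; and x_{k+1} satisfies ∇f(x_{k+1}) + ∇h_k(x_{k+1}) = 0 and f(x_{k+1}) + h_k(x_{k+1}) ≤ f(x_k). Then for every k ≥ 1: min_{i=1,…,k} ‖∇f(x_i)‖ ≤ (L/p!) · ( (f(x_0) − f*) / (k·Δ) )^{p/(p+1)}.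 -/
open scoped RealInnerProductSpace BigOperators

variable {E : Type*} [NormedAddCommGroup E] [InnerProductSpace ℝ E] [FiniteDimensional ℝ E]

/-!
Each step gives `h_k(x_{k+1}) ≥ Δ r_k^{p+1}` with `r_k = ‖x_{k+1} - x_k‖`, so the decrease
`f(x_k) - f(x_{k+1}) ≥ Δ r_k^{p+1}` telescopes to `k Δ min_{i<k} r_i^{p+1} ≤ f(x_0) - f*`.
On the other hand `h_k` is flat to order `p` at `x_k`, so integrating the Lipschitz bound on
`D^p h_k` down `p - 1` times gives `‖∇h_k(y)‖ ≤ (L/p!) ‖y - x_k‖^p`; at the minimising step the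
optimality condition `∇f(x_{i+1}) = -∇h_i(x_{i+1})` turns this into the stated rate.
-/

section FlatFunctions

variable {V F : Type*} [NormedAddCommGroup V] [NormedSpace ℝ V]
  [NormedAddCommGroup F] [NormedSpace ℝ F]

theorem norm_le_of_norm_fderiv_le_mul_pow {g : V → F} (hg : Differentiable ℝ g) {x₀ : V}
    (hg₀ : g x₀ = 0) {C : ℝ} {m : ℕ} (hbd : ∀ z, ‖fderiv ℝ g z‖ ≤ C * ‖z - x₀‖ ^ m) (y : V) :
    ‖g y‖ ≤ C / (m + 1) * ‖y - x₀‖ ^ (m + 1) := by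
  set v := y - x₀
  have hline : ∀ t : ℝ, HasDerivAt (fun t : ℝ => g (x₀ + t • v))
      (fderiv ℝ g (x₀ + t • v) v) t := fun t =>
    (hg _).hasFDerivAt.comp_hasDerivAt t
      (by simpa using ((hasDerivAt_id t).smul_const v).const_add x₀)
  have hmajorant : ∀ t : ℝ, HasDerivAt (fun t : ℝ => C / (m + 1) * ‖v‖ ^ (m + 1) * t ^ (m + 1))
      (C * ‖v‖ ^ (m + 1) * t ^ m) t := fun t =>
    ((hasDerivAt_pow (m + 1) t).const_mul (C / (m + 1) * ‖v‖ ^ (m + 1))).congr_deriv (by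
      rw [Nat.add_sub_cancel]
      push_cast
      field_simp)
  have hslope : ∀ t ∈ Set.Ico (0 : ℝ) 1,
      ‖fderiv ℝ g (x₀ + t • v) v‖ ≤ C * ‖v‖ ^ (m + 1) * t ^ m := fun t ht =>
    calc ‖fderiv ℝ g (x₀ + t • v) v‖ ≤ ‖fderiv ℝ g (x₀ + t • v)‖ * ‖v‖ :=
          ContinuousLinearMap.le_opNorm _ _
      _ ≤ C * ‖t • v‖ ^ m * ‖v‖ := by
          gcongr
          simpa using hbd (x₀ + t • v)
      _ = C * ‖v‖ ^ (m + 1) * t ^ m := by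
          rw [norm_smul, Real.norm_of_nonneg ht.1]
          ring
  have := image_norm_le_of_norm_deriv_right_le_deriv_boundary
    (fun t _ => (hline t).continuousAt.continuousWithinAt) (fun t _ => (hline t).hasDerivWithinAt)
    (by simp [hg₀]) hmajorant hslope (x := 1) (by simp)
  simpa [v] using this

theorem norm_iteratedFDeriv_le_of_vanishing {ψ : V → F} {L : ℝ} {x₀ : V} (m : ℕ) {n : ℕ}
    (hψ : ContDiff ℝ (n + m : ℕ) ψ)
    (hlip : ∀ y, ‖iteratedFDeriv ℝ (n + m) ψ y - iteratedFDeriv ℝ (n + m) ψ x₀‖ ≤ L * ‖y - x₀‖)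
    (hvanish : ∀ i, n ≤ i → i ≤ n + m → iteratedFDeriv ℝ i ψ x₀ = 0) (y : V) :
    ‖iteratedFDeriv ℝ n ψ y‖ ≤ L / (m + 1).factorial * ‖y - x₀‖ ^ (m + 1) := by
  induction m generalizing n y with
  | zero => simpa [hvanish n le_rfl (by simp)] using hlip y
  | succ m ih =>
    have horder : n + 1 + m = n + (m + 1) := by omega
    have hnext : ∀ z, ‖fderiv ℝ (iteratedFDeriv ℝ n ψ) z‖ ≤
        L / (m + 1).factorial * ‖z - x₀‖ ^ (m + 1) := fun z => by
      rw [norm_fderiv_iteratedFDeriv]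
      exact ih (by rwa [horder]) (by rwa [horder])
        (fun i hi hi' => hvanish i (by omega) (by omega)) z
    have hdiff : Differentiable ℝ (iteratedFDeriv ℝ n ψ) :=
      hψ.differentiable_iteratedFDeriv (by exact_mod_cast (by omega : n < n + (m + 1)))
    calc ‖iteratedFDeriv ℝ n ψ y‖
        ≤ L / (m + 1).factorial / (↑(m + 1) + 1) * ‖y - x₀‖ ^ (m + 1 + 1) :=
          norm_le_of_norm_fderiv_le_mul_pow hdiff (hvanish n le_rfl (by omega)) hnext y
      _ = L / (m + 1 + 1).factorial * ‖y - x₀‖ ^ (m + 1 + 1) := by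
          rw [Nat.factorial_succ (m + 1), div_div]
          push_cast
          ring_nf

end FlatFunctions

theorem HasLipschitzDerivOfOrder.norm_gradient_le {ψ : E → ℝ} {p : ℕ} {L : ℝ}
    (hψ : HasLipschitzDerivOfOrder p L ψ) (hp : 1 ≤ p) {x₀ : E}
    (hvanish : ∀ i, 1 ≤ i → i ≤ p → iteratedFDeriv ℝ i ψ x₀ = 0) (y : E) :
    ‖gradient ψ y‖ ≤ L / p.factorial * ‖y - x₀‖ ^ p := by
  obtain ⟨q, rfl⟩ : ∃ q, p = 1 + q := ⟨p - 1, by omega⟩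
  have hflat := norm_iteratedFDeriv_le_of_vanishing q hψ.1 (fun y => hψ.2 y x₀) hvanish y
  rw [add_comm 1 q, gradient, LinearIsometryEquiv.norm_map]
  rwa [norm_iteratedFDeriv_one] at hflat

theorem exists_lt_mul_le_of_descent {a c : ℕ → ℝ} (hstep : ∀ i, a (i + 1) + c i ≤ a i)
    {lo : ℝ} {k : ℕ} (hlo : lo ≤ a k) (hk : 1 ≤ k) :
    ∃ i < k, k * c i ≤ a 0 - lo := by
  obtain ⟨i, hi, hmin⟩ := Finset.exists_min_image (Finset.range k) c ⟨0, Finset.mem_range.mpr hk⟩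
  refine ⟨i, Finset.mem_range.mp hi, ?_⟩
  calc k * c i = (Finset.range k).card • c i := by simp
    _ ≤ ∑ j ∈ Finset.range k, c j := Finset.card_nsmul_le_sum _ _ _ hmin
    _ ≤ ∑ j ∈ Finset.range k, (a j - a (j + 1)) :=
        Finset.sum_le_sum fun j _ => by linarith [hstep j]
    _ ≤ a 0 - lo := by
        rw [Finset.sum_range_sub']
        linarith

theorem pow_le_rpow_of_pow_succ_le {r S : ℝ} (hr : 0 ≤ r) {p : ℕ} (h : r ^ (p + 1) ≤ S) :
    r ^ p ≤ S ^ ((p : ℝ) / (p + 1)) := by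
  have hexp : ((p + 1 : ℕ) : ℝ) * ((p : ℝ) / (p + 1)) = p := by
    push_cast
    field_simp
  calc r ^ p = (r ^ (p + 1)) ^ ((p : ℝ) / (p + 1)) := by
        rw [← Real.rpow_natCast r (p + 1), ← Real.rpow_mul hr, hexp, Real.rpow_natCast]
    _ ≤ S ^ ((p : ℝ) / (p + 1)) := by gcongr

theorem ghom_nonconvex_first_order_rate_general
    (f : E → ℝ)
    (fstar : ℝ) (hbound : ∀ z : E, fstar ≤ f z)
    (p : ℕ) (hp : 1 ≤ p) (L Δ : ℝ) (hL : 0 < L) (hΔ : 0 < Δ)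
    (x : ℕ → E)
    (hstep : ∀ k : ℕ, ∃ h : E → ℝ,
      HasLipschitzDerivOfOrder p L h ∧
      h (x k) = 0 ∧
      (∀ i : ℕ, 1 ≤ i → i ≤ p → iteratedFDeriv ℝ i h (x k) = 0) ∧
      (∀ y : E, Δ * ‖y - x k‖ ^ (p + 1) ≤ h y) ∧
      gradient f (x (k + 1)) + gradient h (x (k + 1)) = 0 ∧
      f (x (k + 1)) + h (x (k + 1)) ≤ f (x k)) :
    ∀ k : ℕ, ∀ hk : 1 ≤ k,
      (Finset.Icc 1 k).inf' (Finset.nonempty_Icc.mpr hk)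
          (fun i => ‖gradient f (x i)‖) ≤
        L / (Nat.factorial p : ℝ) *
          ((f (x 0) - fstar) / ((k : ℝ) * Δ)) ^ ((p : ℝ) / ((p : ℝ) + 1)) := by
  intro k hk
  choose h hlip _ hvanish hgrowth hstationary hdescent using hstep
  set r : ℕ → ℝ := fun i => ‖x (i + 1) - x i‖
  have hdecrease : ∀ i, f (x (i + 1)) + Δ * r i ^ (p + 1) ≤ f (x i) := fun i => by
    linarith [hgrowth i (x (i + 1)), hdescent i]
  have hgrad : ∀ i, ‖gradient f (x (i + 1))‖ ≤ L / p.factorial * r i ^ p := fun i => by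
    rw [eq_neg_of_add_eq_zero_left (hstationary i), norm_neg]
    exact (hlip i).norm_gradient_le hp (hvanish i) _
  obtain ⟨i, hik, hi⟩ := exists_lt_mul_le_of_descent (a := fun i => f (x i)) hdecrease (hbound _) hk
  have hri : r i ^ (p + 1) ≤ (f (x 0) - fstar) / (k * Δ) := by
    rw [le_div_iff₀ (by positivity)]
    linarith
  calc (Finset.Icc 1 k).inf' _ (fun i => ‖gradient f (x i)‖)
      ≤ ‖gradient f (x (i + 1))‖ := Finset.inf'_le _ (Finset.mem_Icc.mpr ⟨by omega, hik⟩)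
    _ ≤ L / p.factorial * r i ^ p := hgrad i
    _ ≤ _ := by gcongr; exact pow_le_rpow_of_pow_succ_le (norm_nonneg _) hri

/-- Sublinear convergence rate of GHOM in terms of first-order optimality conditions
for (possibly nonconvex) objectives, under the strengthened error-function lower bound
`h_k(y) ≥ Δ‖y - x_k‖^{p+1}`. -/
theorem ghom_nonconvex_first_order_rate
    (f : E → ℝ) (hdiff : Differentiable ℝ f)
    (fstar : ℝ) (hbound : ∀ z : E, fstar ≤ f z)
    (p : ℕ) (hp : 1 ≤ p) (L Δ : ℝ) (hL : 0 < L) (hΔ : 0 < Δ)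
    (x : ℕ → E)
    (hstep : ∀ k : ℕ, ∃ h : E → ℝ,
      HasLipschitzDerivOfOrder p L h ∧
      h (x k) = 0 ∧
      (∀ i : ℕ, 1 ≤ i → i ≤ p → iteratedFDeriv ℝ i h (x k) = 0) ∧
      (∀ y : E, Δ * ‖y - x k‖ ^ (p + 1) ≤ h y) ∧
      gradient f (x (k + 1)) + gradient h (x (k + 1)) = 0 ∧
      f (x (k + 1)) + h (x (k + 1)) ≤ f (x k)) :
    ∀ k : ℕ, ∀ hk : 1 ≤ k,
      (Finset.Icc 1 k).inf' (Finset.nonempty_Icc.mpr hk)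
          (fun i => ‖gradient f (x i)‖) ≤
        L / (Nat.factorial p : ℝ) *
          ((f (x 0) - fstar) / ((k : ℝ) * Δ)) ^ ((p : ℝ) / ((p : ℝ) + 1)) :=
  ghom_nonconvex_first_order_rate_general f fstar hbound p hp L Δ hL hΔ x hstep
end

section
/- Let a₁, …, a_m ∈ ℝⁿ and define f : ℝⁿ → ℝ by f(x) = log( Σ_{i=1}^m exp⟨a_i, x⟩ ). Then f is smooth and for all x, h ∈ ℝⁿ: D²f(x)[h, h] ≤ Σ_{i=1}^m ⟨a_i, h⟩², and D³f(x)[h, h, h] ≤ 2·( Σ_{i=1}^m ⟨a_i, h⟩² )^{3/2}. -/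
open scoped RealInnerProductSpace BigOperators

/-- The log-sum-exp function `f(x) = log(Σᵢ exp⟨aᵢ, x⟩)`. -/
noncomputable def logSumExp {n m : ℕ} (a : Fin m → EuclideanSpace ℝ (Fin n))
    (x : EuclideanSpace ℝ (Fin n)) : ℝ :=
  Real.log (∑ i, Real.exp ⟪a i, x⟫)

/-! ### Auxiliary lemmas -/

section Aux

/-- Directional iterated derivatives along a line. -/
lemma iteratedDeriv_line {E : Type*} [NormedAddCommGroup E] [NormedSpace ℝ E]
    (f : E → ℝ) (hf : ContDiff ℝ (⊤ : ℕ∞) f) (k : ℕ) (x h : E) :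
    ∀ t : ℝ, iteratedDeriv k (fun s : ℝ => f (x + s • h)) t
      = iteratedFDeriv ℝ k f (x + t • h) (fun _ => h) := by
  induction k with
  | zero => intro t; simp [iteratedDeriv_zero]
  | succ k ih =>
    intro t
    rw [iteratedDeriv_succ]
    have hfun : iteratedDeriv k (fun s : ℝ => f (x + s • h)) =
        fun s => iteratedFDeriv ℝ k f (x + s • h) (fun _ => h) := funext ih
    rw [hfun]
    have hline : HasDerivAt (fun s : ℝ => x + s • h) h t := by
      simpa using ((hasDerivAt_id t).smul_const h).const_add x
    have hdiff : Differentiable ℝ (iteratedFDeriv ℝ k f) :=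
      hf.differentiable_iteratedFDeriv (by exact_mod_cast ENat.coe_lt_top k)
    have hF : HasFDerivAt (iteratedFDeriv ℝ k f)
        (fderiv ℝ (iteratedFDeriv ℝ k f) (x + t • h)) (x + t • h) :=
      (hdiff _).hasFDerivAt
    have h1 : HasDerivAt (fun s => iteratedFDeriv ℝ k f (x + s • h))
        (fderiv ℝ (iteratedFDeriv ℝ k f) (x + t • h) h) t := hF.comp_hasDerivAt t hline
    have h2 := ((ContinuousMultilinearMap.apply ℝ (fun _ : Fin k => E) ℝ
      (fun _ => h)).hasFDerivAt).comp_hasDerivAt t h1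
    have h3 : HasDerivAt (fun s => (iteratedFDeriv ℝ k f (x + s • h)) (fun _ => h))
        ((fderiv ℝ (iteratedFDeriv ℝ k f) (x + t • h) h) (fun _ => h)) t := h2
    rw [h3.deriv, iteratedFDeriv_succ_apply_left]
    rfl

variable {m : ℕ}

/-- `S_k(t) = Σᵢ cᵢ bᵢ^k exp(bᵢ t)`. -/
noncomputable def Sfun (c b : Fin m → ℝ) (k : ℕ) (t : ℝ) : ℝ :=
  ∑ i, c i * b i ^ k * Real.exp (b i * t)

lemma hasDerivAt_Sfun (c b : Fin m → ℝ) (k : ℕ) (t : ℝ) :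
    HasDerivAt (Sfun c b k) (Sfun c b (k + 1) t) t := by
  unfold Sfun
  apply HasDerivAt.fun_sum
  intro i _
  have h1 : HasDerivAt (fun t : ℝ => b i * t) (b i) t := by
    simpa using (hasDerivAt_id t).const_mul (b i)
  have h3 := h1.exp.const_mul (c i * b i ^ k)
  convert h3 using 1
  case e'_4 => rfl
  ring

lemma Sfun_zero_pos {c b : Fin m → ℝ} (hm : 0 < m) (hc : ∀ i, 0 < c i) (t : ℝ) :
    0 < Sfun c b 0 t := by
  refine Finset.sum_pos (fun i _ => ?_) ⟨⟨0, hm⟩, Finset.mem_univ _⟩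
  have := hc i
  positivity

/-- Moment inequalities for a probability vector. -/
lemma moment_bounds (p b : Fin m → ℝ) (hp : ∀ i, 0 ≤ p i) (hps : ∑ i, p i = 1) :
    (∑ i, p i * b i ^ 2) - (∑ i, p i * b i) ^ 2 ≤ ∑ i, b i ^ 2 ∧
    (∑ i, p i * b i ^ 3) - 3 * (∑ i, p i * b i) * (∑ i, p i * b i ^ 2)
      + 2 * (∑ i, p i * b i) ^ 3 ≤ 2 * (∑ i, b i ^ 2) ^ ((3 : ℝ) / 2) := by
  set μ := ∑ i, p i * b i with hμ
  set X := ∑ i, b i ^ 2 with hX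
  set M := Real.sqrt X with hM
  have hX0 : 0 ≤ X := Finset.sum_nonneg fun i _ => sq_nonneg _
  have hM0 : 0 ≤ M := Real.sqrt_nonneg _
  have hM2 : M ^ 2 = X := Real.sq_sqrt hX0
  have hple1 : ∀ i, p i ≤ 1 := by
    intro i
    calc p i ≤ ∑ j, p j := Finset.single_le_sum (fun j _ => hp j) (Finset.mem_univ i)
    _ = 1 := hps
  have hE2X : (∑ i, p i * b i ^ 2) ≤ X := by
    rw [hX]
    exact Finset.sum_le_sum fun i _ => mul_le_of_le_one_left (sq_nonneg _) (hple1 i)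
  have hbM : ∀ i, |b i| ≤ M := by
    intro i
    have h1 : b i ^ 2 ≤ X := Finset.single_le_sum (f := fun j => b j ^ 2)
      (fun j _ => sq_nonneg _) (Finset.mem_univ i)
    calc |b i| = Real.sqrt (b i ^ 2) := (Real.sqrt_sq_eq_abs _).symm
    _ ≤ M := Real.sqrt_le_sqrt h1
  have hμM : |μ| ≤ M := by
    calc |μ| ≤ ∑ i, |p i * b i| := Finset.abs_sum_le_sum_abs _ _
    _ ≤ ∑ i, p i * M := by
        refine Finset.sum_le_sum fun i _ => ?_
        rw [abs_mul, abs_of_nonneg (hp i)]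
        exact mul_le_mul_of_nonneg_left (hbM i) (hp i)
    _ = M := by rw [← Finset.sum_mul, hps, one_mul]
  have hvar : (∑ i, p i * (b i - μ) ^ 2) = (∑ i, p i * b i ^ 2) - μ ^ 2 := by
    calc (∑ i, p i * (b i - μ) ^ 2)
        = ∑ i, (p i * b i ^ 2 - 2 * μ * (p i * b i) + μ ^ 2 * p i) :=
          Finset.sum_congr rfl fun i _ => by ring
    _ = (∑ i, p i * b i ^ 2) - 2 * μ * μ + μ ^ 2 * 1 := by
          rw [Finset.sum_add_distrib, Finset.sum_sub_distrib, ← Finset.mul_sum,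
            ← Finset.mul_sum, hps, ← hμ]
    _ = (∑ i, p i * b i ^ 2) - μ ^ 2 := by ring
  have hvar_le : (∑ i, p i * (b i - μ) ^ 2) ≤ X := by
    rw [hvar]
    have := sq_nonneg μ
    linarith
  constructor
  · have := sq_nonneg μ
    linarith
  · have hcent : (∑ i, p i * (b i - μ) ^ 3)
        = (∑ i, p i * b i ^ 3) - 3 * μ * (∑ i, p i * b i ^ 2) + 2 * μ ^ 3 := by
      calc (∑ i, p i * (b i - μ) ^ 3)
          = ∑ i, (p i * b i ^ 3 - 3 * μ * (p i * b i ^ 2)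
              + 3 * μ ^ 2 * (p i * b i) - μ ^ 3 * p i) :=
            Finset.sum_congr rfl fun i _ => by ring
      _ = (∑ i, p i * b i ^ 3) - 3 * μ * (∑ i, p i * b i ^ 2)
            + 3 * μ ^ 2 * μ - μ ^ 3 * 1 := by
          rw [Finset.sum_sub_distrib, Finset.sum_add_distrib, Finset.sum_sub_distrib,
            ← Finset.mul_sum, ← Finset.mul_sum, ← Finset.mul_sum, hps, ← hμ]
      _ = _ := by ring
    have hterm : ∀ i, p i * (b i - μ) ^ 3 ≤ p i * (2 * M * (b i - μ) ^ 2) := by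
      intro i
      refine mul_le_mul_of_nonneg_left ?_ (hp i)
      have habs : |b i - μ| ≤ 2 * M := by
        calc |b i - μ| ≤ |b i| + |μ| := abs_sub _ _
        _ ≤ M + M := add_le_add (hbM i) hμM
        _ = 2 * M := by ring
      have h1 : (b i - μ) ^ 3 = (b i - μ) * (b i - μ) ^ 2 := by ring
      rw [h1]
      exact mul_le_mul_of_nonneg_right ((le_abs_self _).trans habs) (sq_nonneg _)
    have hsum3 : (∑ i, p i * (b i - μ) ^ 3) ≤ 2 * M * X := by
      calc (∑ i, p i * (b i - μ) ^ 3)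
          ≤ ∑ i, p i * (2 * M * (b i - μ) ^ 2) := Finset.sum_le_sum fun i _ => hterm i
      _ = 2 * M * ∑ i, p i * (b i - μ) ^ 2 := by
          rw [Finset.mul_sum]; exact Finset.sum_congr rfl fun i _ => by ring
      _ ≤ 2 * M * X := by
          refine mul_le_mul_of_nonneg_left hvar_le (by positivity)
    have hX32 : X ^ ((3 : ℝ) / 2) = M * X := by
      have h1 : X ^ ((3 : ℝ) / 2) = (X ^ ((1 : ℝ) / 2)) ^ (3 : ℕ) := by
        rw [← Real.rpow_natCast (X ^ ((1 : ℝ) / 2)) 3, ← Real.rpow_mul hX0]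
        norm_num
      rw [h1, ← Real.sqrt_eq_rpow, ← hM]
      have : M ^ (3 : ℕ) = M ^ 2 * M := by ring
      rw [this, hM2]; ring
    calc (∑ i, p i * b i ^ 3) - 3 * μ * (∑ i, p i * b i ^ 2) + 2 * μ ^ 3
        = ∑ i, p i * (b i - μ) ^ 3 := hcent.symm
    _ ≤ 2 * M * X := hsum3
    _ = 2 * (X ^ ((3 : ℝ) / 2)) := by rw [hX32]; ring

/-- 1-dimensional version: derivative bounds for `t ↦ log Σ cᵢ exp(bᵢ t)`. -/
lemma oneDim (hm : 0 < m) (c b : Fin m → ℝ) (hc : ∀ i, 0 < c i) (t : ℝ) :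
    iteratedDeriv 2 (fun s => Real.log (Sfun c b 0 s)) t ≤ ∑ i, b i ^ 2 ∧
    iteratedDeriv 3 (fun s => Real.log (Sfun c b 0 s)) t
      ≤ 2 * (∑ i, b i ^ 2) ^ ((3 : ℝ) / 2) := by
  have hS0 : ∀ s, 0 < Sfun c b 0 s := Sfun_zero_pos hm hc
  set Q : ℕ → ℝ → ℝ := fun k s => Sfun c b k s / Sfun c b 0 s with hQdef
  have hQ : ∀ k s, HasDerivAt (Q k) (Q (k + 1) s - Q k s * Q 1 s) s := by
    intro k s
    have h := (hasDerivAt_Sfun c b k s).div (hasDerivAt_Sfun c b 0 s) (hS0 s).ne'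
    convert h using 1
    case e'_4 => rfl
    case e'_5 => rfl
    case e'_8 => rfl
    have h0 : Sfun c b 0 s ≠ 0 := (hS0 s).ne'
    simp only [hQdef]
    field_simp
  have hd1 : deriv (fun s => Real.log (Sfun c b 0 s)) = Q 1 := by
    funext s
    exact ((hasDerivAt_Sfun c b 0 s).log (hS0 s).ne').deriv
  have hd2 : deriv (deriv (fun s => Real.log (Sfun c b 0 s)))
      = fun s => Q 2 s - Q 1 s * Q 1 s := by
    rw [hd1]; funext s
    have := (hQ 1 s).deriv
    rw [this]
  have hid2 : ∀ s, iteratedDeriv 2 (fun s => Real.log (Sfun c b 0 s)) s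
      = Q 2 s - Q 1 s * Q 1 s := by
    intro s
    rw [show (2 : ℕ) = 1 + 1 from rfl, iteratedDeriv_succ, iteratedDeriv_one, hd2]
  have hid3 : iteratedDeriv 3 (fun s => Real.log (Sfun c b 0 s)) t
      = Q 3 t - 3 * Q 1 t * Q 2 t + 2 * Q 1 t ^ 3 := by
    rw [show (3 : ℕ) = 2 + 1 from rfl, iteratedDeriv_succ]
    have hfun : iteratedDeriv 2 (fun s => Real.log (Sfun c b 0 s))
        = fun s => Q 2 s - Q 1 s * Q 1 s := funext hid2
    rw [hfun]
    have h := ((hQ 2 t).fun_sub ((hQ 1 t).fun_mul (hQ 1 t))).deriv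
    rw [h]
    ring
  -- probability weights
  set p : Fin m → ℝ := fun i => c i * Real.exp (b i * t) / Sfun c b 0 t with hpdef
  have hp0 : ∀ i, 0 ≤ p i := by
    intro i
    have := hc i
    have := hS0 t
    positivity
  have hps : ∑ i, p i = 1 := by
    simp only [hpdef]
    rw [← Finset.sum_div]
    rw [div_eq_one_iff_eq (hS0 t).ne']
    unfold Sfun
    exact Finset.sum_congr rfl fun i _ => by ring
  have hQp : ∀ k, Q k t = ∑ i, p i * b i ^ k := by
    intro k
    simp only [hQdef, hpdef, Sfun]
    rw [Finset.sum_div]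
    exact Finset.sum_congr rfl fun i _ => by ring
  obtain ⟨hb1, hb2⟩ := moment_bounds p b hp0 hps
  constructor
  · rw [hid2 t, hQp 2, hQp 1]
    simp only [pow_one]
    nlinarith [hb1]
  · rw [hid3, hQp 3, hQp 2, hQp 1]
    simp only [pow_one]
    linarith [hb2]

end Aux

/-- The log-sum-exp function is smooth, its second derivative is bounded by
`Σᵢ ⟨aᵢ, h⟩²` and its third derivative by `2·(Σᵢ ⟨aᵢ, h⟩²)^{3/2}`. -/
theorem logSumExp_deriv_bounds (n m : ℕ) (a : Fin m → EuclideanSpace ℝ (Fin n)) :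
    ContDiff ℝ (⊤ : ℕ∞) (logSumExp a) ∧
    ∀ x h : EuclideanSpace ℝ (Fin n),
      iteratedFDeriv ℝ 2 (logSumExp a) x ![h, h] ≤ ∑ i, ⟪a i, h⟫ ^ 2 ∧
      iteratedFDeriv ℝ 3 (logSumExp a) x ![h, h, h] ≤
        2 * (∑ i, ⟪a i, h⟫ ^ 2) ^ ((3 : ℝ) / 2) := by
  rcases Nat.eq_zero_or_pos m with hm | hm
  · subst hm
    have hconst : logSumExp a = fun _ => (0 : ℝ) := by
      funext x
      simp [logSumExp]
    rw [hconst]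
    refine ⟨contDiff_const, fun x h => ?_⟩
    rw [iteratedFDeriv_const_of_ne (by norm_num), iteratedFDeriv_const_of_ne (by norm_num)]
    simp [Real.zero_rpow (by norm_num : ((3 : ℝ) / 2) ≠ 0)]
  · -- positivity of the sum
    have hpos : ∀ x : EuclideanSpace ℝ (Fin n), 0 < ∑ i, Real.exp ⟪a i, x⟫ := fun x =>
      Finset.sum_pos (fun i _ => Real.exp_pos _) ⟨⟨0, hm⟩, Finset.mem_univ _⟩
    have hsmooth : ContDiff ℝ (⊤ : ℕ∞) (logSumExp a) := by
      have hS : ContDiff ℝ (⊤ : ℕ∞) (fun x : EuclideanSpace ℝ (Fin n) => ∑ i, Real.exp ⟪a i, x⟫) := by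
        apply ContDiff.sum
        intro i _
        exact Real.contDiff_exp.comp (innerSL ℝ (a i)).contDiff
      rw [contDiff_iff_contDiffAt]
      intro x
      exact hS.contDiffAt.log (hpos x).ne'
    refine ⟨hsmooth, fun x h => ?_⟩
    set c : Fin m → ℝ := fun i => Real.exp ⟪a i, x⟫ with hcdef
    set b : Fin m → ℝ := fun i => ⟪a i, h⟫ with hbdef
    have hc : ∀ i, 0 < c i := fun i => Real.exp_pos _
    have hg : (fun s : ℝ => logSumExp a (x + s • h)) = fun s => Real.log (Sfun c b 0 s) := by
      funext s
      unfold logSumExp Sfun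
      congr 1
      refine Finset.sum_congr rfl fun i _ => ?_
      rw [inner_add_right, real_inner_smul_right, Real.exp_add, pow_zero, mul_one]
      rw [mul_comm s ⟪a i, h⟫]
    have hline : ∀ k : ℕ, iteratedFDeriv ℝ k (logSumExp a) x (fun _ => h)
        = iteratedDeriv k (fun s => Real.log (Sfun c b 0 s)) 0 := by
      intro k
      rw [← hg, iteratedDeriv_line (logSumExp a) hsmooth k x h 0]
      simp
    obtain ⟨h2, h3⟩ := oneDim hm c b hc 0
    have hv2 : (![h, h] : Fin 2 → EuclideanSpace ℝ (Fin n)) = fun _ => h := by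
      funext i; fin_cases i <;> rfl
    have hv3 : (![h, h, h] : Fin 3 → EuclideanSpace ℝ (Fin n)) = fun _ => h := by
      funext i; fin_cases i <;> rfl
    constructor
    · rw [hv2, hline 2]
      exact h2
    · rw [hv3, hline 3]
      exact h3
end

section
/- Let q ≥ 2 be a real number, σ > 0, ψ : E → ℝ, x ∈ E and v ∈ E such that ψ(y) ≥ ψ(x) + ⟨v, y − x⟩ + (σ/q)·‖y − x‖^q for all y ∈ E. Then inf_{y ∈ E} ψ(y) ≥ ψ(x) − ((q−1)/q)·(1/σ)^{1/(q−1)}·‖v‖^{q/(q−1)}. -/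
/-!
Since `ψ` dominates the model `y ↦ ψ x + ⟪v, y - x⟫ + σ / q * ‖y - x‖ ^ q`, it suffices to bound
the model from below. By Cauchy–Schwarz it is at least `ψ x - ‖v‖ t + σ / q * t ^ q` with
`t = ‖y - x‖`, and a rescaled Young inequality with exponents `q / (q - 1)` and `q` bounds
`‖v‖ t` by the convex conjugate of `t ↦ σ / q * t ^ q` at `‖v‖` plus `σ / q * t ^ q`.
-/

open scoped RealInnerProductSpace

variable {E : Type*} [NormedAddCommGroup E] [InnerProductSpace ℝ E] [FiniteDimensional ℝ E]

theorem Real.mul_le_young_weighted {q σ a t : ℝ} (hq : 1 < q) (hσ : 0 < σ) (ha : 0 ≤ a)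
    (ht : 0 ≤ t) :
    a * t ≤ (q - 1) / q * (1 / σ) ^ (1 / (q - 1)) * a ^ (q / (q - 1)) + σ / q * t ^ q := by
  have hq₀ : q ≠ 0 := by positivity
  have hq₁ : q - 1 ≠ 0 := sub_ne_zero.2 hq.ne'
  have hconj : (q / (q - 1)).HolderConjugate q := (Real.HolderConjugate.conjExponent hq).symm
  -- Young's inequality for `(a σ^{-1/q}) (t σ^{1/q})`.
  have young := Real.young_inequality_of_nonneg (mul_nonneg ha (rpow_nonneg hσ.le (-(1 / q))))
    (mul_nonneg ht (rpow_nonneg hσ.le (1 / q))) hconj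
  have hprod : a * σ ^ (-(1 / q)) * (t * σ ^ (1 / q)) = a * t := by
    rw [mul_mul_mul_comm, ← rpow_add hσ, neg_add_cancel, rpow_zero, mul_one]
  have hfst :
      (a * σ ^ (-(1 / q))) ^ (q / (q - 1)) = (1 / σ) ^ (1 / (q - 1)) * a ^ (q / (q - 1)) := by
    rw [mul_rpow ha (rpow_nonneg hσ.le _), ← rpow_mul hσ.le, one_div σ, inv_rpow hσ.le,
      ← rpow_neg hσ.le, mul_comm]
    congr 2
    field_simp
  have hsnd : (t * σ ^ (1 / q)) ^ q = σ * t ^ q := by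
    rw [mul_rpow ht (rpow_nonneg hσ.le _), ← rpow_mul hσ.le, one_div_mul_cancel hq₀, rpow_one,
      mul_comm]
  rw [hprod, hfst, hsnd] at young
  calc a * t ≤ _ := young
    _ = _ := by field_simp

section

variable {F : Type*} [NormedAddCommGroup F] [InnerProductSpace ℝ F]

theorem neg_young_weighted_le_inner_add_rpow_norm {q σ : ℝ} (hq : 1 < q) (hσ : 0 < σ) (v z : F) :
    -((q - 1) / q * (1 / σ) ^ (1 / (q - 1)) * ‖v‖ ^ (q / (q - 1))) ≤ ⟪v, z⟫ + σ / q * ‖z‖ ^ q := by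
  have := Real.mul_le_young_weighted hq hσ (norm_nonneg v) (norm_nonneg z)
  linarith [neg_le_of_abs_le (abs_real_inner_le_norm v z)]

end

/-- If `ψ` dominates the uniformly convex lower model
`y ↦ ψ(x) + ⟨v, y-x⟩ + (σ/q)‖y-x‖^q`, then
`inf ψ ≥ ψ(x) - ((q-1)/q)(1/σ)^{1/(q-1)}‖v‖^{q/(q-1)}`. -/
theorem uniformly_convex_lower_bound_on_inf
    (q σ : ℝ) (hq : 2 ≤ q) (hσ : 0 < σ)
    (ψ : E → ℝ) (x v : E)
    (hyp : ∀ y : E, ψ x + ⟪v, y - x⟫ + σ / q * ‖y - x‖ ^ q ≤ ψ y) :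
    ∀ y : E,
      ψ x - (q - 1) / q * (1 / σ) ^ (1 / (q - 1)) * ‖v‖ ^ (q / (q - 1)) ≤ ψ y := by
  intro y
  linarith [hyp y, neg_young_weighted_le_inner_add_rpow_norm (by linarith : 1 < q) hσ v (y - x)]
end

section
/- Let θ ∈ (0, 1) and let (Δ_k)_{k≥0} be a sequence of positive real numbers with Δ_k → 0 such that Δ_{k+1}^{θ} ≤ Δ_k − Δ_{k+1} for all k ≥ 0. Then Δ_{k+1}/Δ_k → 0 as k → ∞, i.e. the sequence converges to zero superlinearly. -/
/-! Dropping `Δ_{k+1}` from the right-hand side, the recurrence gives `Δ_{k+1}^θ ≤ Δ_k`, hence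
`Δ_{k+1} / Δ_k ≤ Δ_{k+1}^{1-θ}`, which tends to `0` because `1 - θ > 0`. -/

lemma div_le_rpow_one_sub_of_rpow_le_sub {a b θ : ℝ} (hb : 0 < b) (h : b ^ θ ≤ a - b) :
    b / a ≤ b ^ (1 - θ) := by
  have hbθ : 0 < b ^ θ := Real.rpow_pos_of_pos hb θ
  calc b / a ≤ b / b ^ θ := div_le_div_of_nonneg_left hb.le hbθ (by linarith)
    _ = b ^ (1 - θ) := by rw [Real.rpow_sub hb, Real.rpow_one]

/-- The KL recurrence `Δ_{k+1}^θ ≤ Δ_k - Δ_{k+1}` with `θ ∈ (0,1)` and `Δ_k → 0`,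
`Δ_k > 0`, forces superlinear convergence of `Δ_k` to zero:
`Δ_{k+1}/Δ_k → 0`. -/
theorem kl_recurrence_superlinear
    (θ : ℝ) (hθ : θ ∈ Set.Ioo (0 : ℝ) 1)
    (Δ : ℕ → ℝ) (hpos : ∀ k : ℕ, 0 < Δ k)
    (hlim : Filter.Tendsto Δ Filter.atTop (nhds 0))
    (hrec : ∀ k : ℕ, Δ (k + 1) ^ θ ≤ Δ k - Δ (k + 1)) :
    Filter.Tendsto (fun k : ℕ => Δ (k + 1) / Δ k) Filter.atTop (nhds 0) := by
  have hexp : 0 < 1 - θ := sub_pos.mpr hθ.2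
  have hbound : Filter.Tendsto (fun k => Δ (k + 1) ^ (1 - θ)) Filter.atTop (nhds 0) := by
    simpa [Real.zero_rpow hexp.ne'] using
      ((Filter.tendsto_add_atTop_iff_nat 1).mpr hlim).rpow_const (Or.inr hexp.le)
  exact squeeze_zero (fun k => div_nonneg (hpos _).le (hpos _).le)
    (fun k => div_le_rpow_one_sub_of_rpow_le_sub (hpos (k + 1)) (hrec k)) hbound
end
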